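/- arXiv:cs/0701039 — 6 statements merged into one kernel-verified Lean document; each statement's English description precedes it below -/
import Mathlib

section
/- Let A be an m×L matrix with entries in {0,1} and c a vector of natural numbers of length m. If the system A·x = c has a solution over the natural numbers, then it has a solution over the natural numbers with at most m·log₂(L+1) non-zero entries. -/
/-!
Take a solution `b` whose support `S` has minimal size. The column sums of `A` over the subsets
of `S` lie in `{0, …, |S|}^m`, so if `2^|S| > (|S| + 1)^m` two distinct subsets have the same
column sums; removing their intersection leaves disjoint `U`, `V` with equal column sums, `U ≠ ∅`.
Moving `min_U b` units from every coordinate in `U` to every coordinate in `V` preserves `A b` and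
empties a coordinate of `S`, against minimality. Hence `2^|S| ≤ (|S| + 1)^m ≤ (L + 1)^m`.
-/

open Finset

namespace Matrix

variable {ι κ : Type*} [DecidableEq κ]

theorem mulVec_ite_mem_one_zero [Fintype κ] (A : Matrix ι κ ℕ) (U : Finset κ) :
    (A *ᵥ fun j => if j ∈ U then 1 else 0) = fun i => ∑ j ∈ U, A i j := by
  funext i
  simp only [mulVec, dotProduct, mul_ite, mul_one, mul_zero, sum_ite_mem, univ_inter]

theorem exists_mulVec_eq_card_support_lt_of_sum_eq [Fintype κ] {A : Matrix ι κ ℕ} {b : κ → ℕ}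
    {U V : Finset κ} (hUV : Disjoint U V) (hU : U.Nonempty)
    (hUb : ∀ j ∈ U, b j ≠ 0) (hVb : ∀ j ∈ V, b j ≠ 0)
    (hsum : ∀ i, ∑ j ∈ U, A i j = ∑ j ∈ V, A i j) :
    ∃ b' : κ → ℕ, A *ᵥ b' = A *ᵥ b ∧ #{j | b' j ≠ 0} < #{j | b j ≠ 0} := by
  obtain ⟨j₀, hj₀U, hmin⟩ := exists_min_image U b hU
  set t := b j₀
  let b₀ : κ → ℕ := fun j => if j ∈ U then b j - t else b j
  have hb : b = b₀ + t • fun j => if j ∈ U then 1 else 0 := by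
    funext j
    by_cases hj : j ∈ U
    · simp [b₀, hj, Nat.sub_add_cancel (hmin j hj)]
    · simp [b₀, hj]
  refine ⟨b₀ + t • fun j => if j ∈ V then 1 else 0, ?_, ?_⟩
  · rw [hb, mulVec_add, mulVec_add, mulVec_smul, mulVec_smul, mulVec_ite_mem_one_zero,
      mulVec_ite_mem_one_zero]
    simp only [hsum]
  · have hj₀V : j₀ ∉ V := disjoint_left.mp hUV hj₀U
    refine card_lt_card ⟨fun j hj => ?_, fun hsub => ?_⟩
    · simp only [mem_filter, mem_univ, true_and, Pi.add_apply, Pi.smul_apply, smul_eq_mul,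
        b₀] at hj ⊢
      by_cases hjV : j ∈ V
      · exact hVb j hjV
      · simp only [hjV, if_false, mul_zero, add_zero] at hj
        split_ifs at hj <;> omega
    · have := hsub (by simpa using hUb j₀ hj₀U)
      simp [b₀, hj₀U, hj₀V, t] at this

theorem exists_disjoint_subset_sum_eq_of_two_pow_card_gt [Fintype ι] {A : Matrix ι κ ℕ}
    (hA : ∀ i j, A i j ≤ 1) {S : Finset κ} (hS : (#S + 1) ^ Fintype.card ι < 2 ^ #S) :
    ∃ U ⊆ S, ∃ V ⊆ S, Disjoint U V ∧ U.Nonempty ∧ ∀ i, ∑ j ∈ U, A i j = ∑ j ∈ V, A i j := by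
  classical
  have hmaps : ∀ T ∈ S.powerset,
      (fun i => ∑ j ∈ T, A i j) ∈ Fintype.piFinset fun _ => range (#S + 1) := by
    intro T hT
    simp only [Fintype.mem_piFinset, mem_range, Nat.lt_succ_iff]
    intro i
    calc ∑ j ∈ T, A i j ≤ #T • 1 := sum_le_card_nsmul T _ 1 fun j _ => hA i j
      _ ≤ #S := by simpa using card_le_card (mem_powerset.1 hT)
  have hcard : #(Fintype.piFinset fun _ : ι => range (#S + 1)) < #S.powerset := by
    simpa [card_powerset] using hS
  obtain ⟨T₁, hT₁, T₂, hT₂, hne, heq⟩ := exists_ne_map_eq_of_card_lt_of_maps_to hcard hmaps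
  wlog hsub : ¬T₁ ⊆ T₂ generalizing T₁ T₂
  · exact this T₂ hT₂ T₁ hT₁ hne.symm heq.symm fun h => hne (not_not.1 hsub |>.antisymm h)
  exact ⟨T₁ \ T₂, sdiff_subset.trans (mem_powerset.1 hT₁), T₂ \ T₁,
    sdiff_subset.trans (mem_powerset.1 hT₂), disjoint_sdiff_sdiff, sdiff_nonempty.2 hsub,
    fun i => sum_sdiff_eq_sum_sdiff_iff.2 (congrFun heq i)⟩

theorem exists_mulVec_eq_two_pow_card_support_le [Fintype ι] [Fintype κ] {A : Matrix ι κ ℕ}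
    (hA : ∀ i j, A i j ≤ 1) (b : κ → ℕ) :
    ∃ b' : κ → ℕ, A *ᵥ b' = A *ᵥ b ∧
      2 ^ #{j | b' j ≠ 0} ≤ (#{j | b' j ≠ 0} + 1) ^ Fintype.card ι := by
  induction h : #{j | b j ≠ 0} using Nat.strong_induction_on generalizing b with
  | _ n ih =>
  by_cases hle : 2 ^ n ≤ (n + 1) ^ Fintype.card ι
  · exact ⟨b, rfl, h ▸ hle⟩
  obtain ⟨U, hUS, V, hVS, hUV, hU, hsum⟩ :=
    exists_disjoint_subset_sum_eq_of_two_pow_card_gt hA (S := {j | b j ≠ 0}) (h ▸ not_le.1 hle)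
  obtain ⟨b', hb', hlt⟩ := exists_mulVec_eq_card_support_lt_of_sum_eq hUV hU
    (fun j hj => (mem_filter.1 (hUS hj)).2) (fun j hj => (mem_filter.1 (hVS hj)).2) hsum
  obtain ⟨b'', hb'', hbound⟩ := ih _ (h ▸ hlt) b' rfl
  exact ⟨b'', hb''.trans hb', hbound⟩

end Matrix

theorem Real.natCast_le_mul_logb_of_two_pow_le {n m N : ℕ} (hN : 0 < N) (h : 2 ^ n ≤ N ^ m) :
    (n : ℝ) ≤ m * Real.logb 2 N := by
  rw [← Real.logb_pow, Real.le_logb_iff_rpow_le one_lt_two (by positivity), Real.rpow_natCast]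
  exact_mod_cast h

theorem boolean_system_sparse_solution (m L : ℕ)
    (A : Matrix (Fin m) (Fin L) ℕ) (hA : ∀ i j, A i j = 0 ∨ A i j = 1)
    (c : Fin m → ℕ) (h : ∃ b : Fin L → ℕ, A.mulVec b = c) :
    ∃ b : Fin L → ℕ, A.mulVec b = c ∧
      ((Finset.univ.filter (fun j => b j ≠ 0)).card : ℝ) ≤
        m * Real.logb 2 (L + 1) := by
  obtain ⟨b, rfl⟩ := h
  obtain ⟨b', hb', hbound⟩ := Matrix.exists_mulVec_eq_two_pow_card_support_le
    (fun i j => (hA i j).elim (fun h => h ▸ zero_le_one) le_of_eq) b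
  refine ⟨b', hb', ?_⟩
  have hsupp : #{j | b' j ≠ 0} ≤ L := (card_le_univ _).trans_eq (Fintype.card_fin L)
  have hpow : 2 ^ #{j | b' j ≠ 0} ≤ (L + 1) ^ m := by
    simpa using hbound.trans (Nat.pow_le_pow_left (Nat.succ_le_succ hsupp) _)
  exact_mod_cast Real.natCast_le_mul_logb_of_two_pow_le L.succ_pos hpow
end

section
/- Let A be an m×L matrix with entries in {0,1}, c ∈ ℕ^m, and suppose b ∈ ℕ^L is a solution of A·x = c with a minimal number k of non-zero entries among all solutions over ℕ. Then k ≤ m·log₂(k+1). -/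
/-!
If `b` has support `F` with `(#F + 1) ^ m < 2 ^ #F`, then by pigeonhole two distinct subsets
`S ≠ T` of `F` have the same column sums in the `0/1` matrix `A` (each sum lies in `[0, #F]`).
Then `S \ T` and `T \ S` also have equal column sums, and shifting the weight `min_{S \ T} b`
from `S \ T` to `T \ S` gives a solution of `A x = A b` whose support is strictly smaller.
So a minimal `b` satisfies `2 ^ k ≤ (k + 1) ^ m`, and taking `logb 2` gives the bound.
-/

open Finset Matrix

theorem exists_ne_subset_sum_eq_of_card_lt {ι κ : Type*} [Fintype κ] (A : Matrix κ ι ℕ)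
    (hA : ∀ i j, A i j ≤ 1) (F : Finset ι) (hF : (#F + 1) ^ Fintype.card κ < 2 ^ #F) :
    ∃ S ⊆ F, ∃ T ⊆ F, S ≠ T ∧ ∀ i, ∑ j ∈ S, A i j = ∑ j ∈ T, A i j := by
  classical
  have hmaps : Set.MapsTo (fun S i => ∑ j ∈ S, A i j) F.powerset
      (Fintype.piFinset fun _ : κ => range (#F + 1)) := by
    intro S hS
    rw [mem_coe, mem_powerset] at hS
    rw [mem_coe, Fintype.mem_piFinset]
    intro i
    rw [mem_range]
    calc ∑ j ∈ S, A i j ≤ ∑ j ∈ S, 1 := sum_le_sum fun j _ => hA i j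
      _ = #S := by simp
      _ < #F + 1 := Nat.lt_succ_of_le (card_le_card hS)
  have hcard : #(Fintype.piFinset fun _ : κ => range (#F + 1)) < #F.powerset := by
    simpa [Fintype.card_piFinset] using hF
  obtain ⟨S, hS, T, hT, hne, heq⟩ := exists_ne_map_eq_of_card_lt_of_maps_to hcard hmaps
  exact ⟨S, mem_powerset.mp hS, T, mem_powerset.mp hT, hne, congrFun heq⟩

variable {ι κ : Type*} [Fintype ι]

def nonzeroSupport (b : ι → ℕ) : Finset ι := univ.filter (b · ≠ 0)

@[simp]
theorem mem_nonzeroSupport {b : ι → ℕ} {j : ι} : j ∈ nonzeroSupport b ↔ b j ≠ 0 := by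
  simp [nonzeroSupport]

variable [DecidableEq ι]

theorem mulVec_ite_mem (A : Matrix κ ι ℕ) (s : Finset ι) (t : ℕ) :
    A *ᵥ (fun j => if j ∈ s then t else 0) = fun i => (∑ j ∈ s, A i j) * t := by
  ext i
  simp only [mulVec, dotProduct, mul_ite, mul_zero, sum_ite_mem, univ_inter, sum_mul]

theorem exists_mulVec_eq_nonzeroSupport_ssubset (A : Matrix κ ι ℕ) {b : ι → ℕ}
    {S T : Finset ι} (hS : S ⊆ nonzeroSupport b) (hT : T ⊆ nonzeroSupport b)
    (hST : Disjoint S T) (hne : S.Nonempty) (hsum : ∀ i, ∑ j ∈ S, A i j = ∑ j ∈ T, A i j) :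
    ∃ b' : ι → ℕ, A *ᵥ b' = A *ᵥ b ∧ nonzeroSupport b' ⊂ nonzeroSupport b := by
  obtain ⟨j₀, hj₀S, hj₀min⟩ := S.exists_min_image b hne
  set w : Finset ι → ι → ℕ := fun s j => if j ∈ s then b j₀ else 0
  have hwS : w S ≤ b := fun j => by
    by_cases hj : j ∈ S <;> simp [w, hj, hj₀min]
  refine ⟨b - w S + w T, ?_, ?_⟩
  · have hshift : b - w S + w T + w S = b + w T := by
      rw [add_right_comm, tsub_add_cancel_of_le hwS]
    have hw : A *ᵥ w S = A *ᵥ w T := by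
      simp only [w, mulVec_ite_mem, hsum]
    apply add_right_cancel (b := A *ᵥ w S)
    rw [← mulVec_add, hshift, mulVec_add, hw]
  · have hj₀T : j₀ ∉ T := disjoint_left.mp hST hj₀S
    refine ssubset_iff_of_subset ?_ |>.mpr ⟨j₀, hS hj₀S, ?_⟩
    · intro j
      by_cases hjT : j ∈ T
      · exact fun _ => hT hjT
      · simp only [mem_nonzeroSupport, Pi.add_apply, Pi.sub_apply, w, if_neg hjT]
        omega
    · simp [w, hj₀S, hj₀T]

section Minimal

variable (A : Matrix κ ι ℕ) {b : ι → ℕ}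
  (hmin : ∀ b', A *ᵥ b' = A *ᵥ b → #(nonzeroSupport b) ≤ #(nonzeroSupport b'))
include hmin

theorem subset_of_sum_eq_of_minimal {S T : Finset ι} (hS : S ⊆ nonzeroSupport b)
    (hT : T ⊆ nonzeroSupport b) (hsum : ∀ i, ∑ j ∈ S, A i j = ∑ j ∈ T, A i j) : S ⊆ T := by
  by_contra hST
  obtain ⟨b', hb', hlt⟩ := exists_mulVec_eq_nonzeroSupport_ssubset A
    (sdiff_subset.trans hS) (sdiff_subset.trans hT) disjoint_sdiff_sdiff
    (sdiff_nonempty.mpr hST) fun i => sum_sdiff_eq_sum_sdiff_iff.mpr (hsum i)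
  exact (card_lt_card hlt).not_ge (hmin b' hb')

theorem two_pow_card_nonzeroSupport_le_of_minimal [Fintype κ] (hA : ∀ i j, A i j ≤ 1) :
    2 ^ #(nonzeroSupport b) ≤ (#(nonzeroSupport b) + 1) ^ Fintype.card κ := by
  by_contra! h
  obtain ⟨S, hS, T, hT, hne, hsum⟩ := exists_ne_subset_sum_eq_of_card_lt A hA _ h
  exact hne <| (subset_of_sum_eq_of_minimal A hmin hS hT hsum).antisymm
    (subset_of_sum_eq_of_minimal A hmin hT hS fun i => (hsum i).symm)

end Minimal

theorem minimal_solution_support_bound (m L : ℕ)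
    (A : Matrix (Fin m) (Fin L) ℕ) (hA : ∀ i j, A i j = 0 ∨ A i j = 1)
    (c : Fin m → ℕ) (b : Fin L → ℕ) (hb : A.mulVec b = c)
    (hmin : ∀ b' : Fin L → ℕ, A.mulVec b' = c →
      (Finset.univ.filter (fun j => b j ≠ 0)).card ≤
        (Finset.univ.filter (fun j => b' j ≠ 0)).card)
    (k : ℕ) (hk : k = (Finset.univ.filter (fun j => b j ≠ 0)).card) :
    (k : ℝ) ≤ m * Real.logb 2 (k + 1) := by
  have hpow : 2 ^ k ≤ (k + 1) ^ m := by
    have := two_pow_card_nonzeroSupport_le_of_minimal A (b := b)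
      (fun b' hb' => hmin b' (hb'.trans hb)) fun i j => by rcases hA i j with h | h <;> omega
    rw [Fintype.card_fin] at this
    rwa [hk]
  have hpowℝ : (2 : ℝ) ^ k ≤ ((k : ℝ) + 1) ^ m := by exact_mod_cast hpow
  have hlog := Real.logb_le_logb_of_le (b := 2) one_lt_two (by positivity) hpowℝ
  rwa [Real.logb_pow, Real.logb_pow, Real.logb_self_eq_one one_lt_two, mul_one] at hlog
end

section
/- Let A be an m×L matrix with entries in {0,1}, let b ∈ ℕ^L be a solution of A·x = c whose first k entries are positive and remaining entries are zero, and suppose there exist distinct disjoint subsets J, J' of {1,…,k} with J nonempty such that the sum of the columns of A indexed by J equals the sum of the columns indexed by J'. Then there exists a solution b* ∈ ℕ^L of A·x = c with strictly fewer non-zero entries than b. -/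
open Finset

namespace Matrix

variable {m n R : Type*} [Fintype n]

theorem mulVec_indicator_one [NonAssocSemiring R] (A : Matrix m n R) (J : Finset n) :
    A *ᵥ (J : Set n).indicator 1 = fun i => ∑ j ∈ J, A i j := by
  classical
  ext i
  simp [mulVec, dotProduct, Set.indicator_apply, sum_ite_mem]

theorem mulVec_add_smul_indicator_eq [CommSemiring R] {A : Matrix m n R} {J J' : Finset n}
    (hcols : ∀ i, ∑ j ∈ J, A i j = ∑ j ∈ J', A i j) (x : n → R) (t : R) :
    A *ᵥ (x + t • (J : Set n).indicator 1) = A *ᵥ (x + t • (J' : Set n).indicator 1) := by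
  simp only [mulVec_add, mulVec_smul, mulVec_indicator_one, hcols]

/-- Shifting `t = min_{j ∈ J} b j` of mass from the columns in `J` to those in `J'` keeps
`A *ᵥ b` and empties a column of `J` without filling a new one. -/
theorem exists_mulVec_eq_support_ssubset (A : Matrix m n ℕ) (b : n → ℕ) {J J' : Finset n}
    (hdisj : Disjoint J J') (hJ : J.Nonempty) (hJb : ∀ j ∈ J, b j ≠ 0)
    (hJ'b : ∀ j ∈ J', b j ≠ 0) (hcols : ∀ i, ∑ j ∈ J, A i j = ∑ j ∈ J', A i j) :
    ∃ b' : n → ℕ, A *ᵥ b' = A *ᵥ b ∧ univ.filter (b' · ≠ 0) ⊂ univ.filter (b · ≠ 0) := by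
  classical
  obtain ⟨j₀, hj₀J, hmin⟩ := J.exists_min_image b hJ
  have hle : b j₀ • (J : Set n).indicator 1 ≤ b := fun j => by
    by_cases hj : j ∈ J <;> simp [hj, hmin j]
  refine ⟨b - b j₀ • (J : Set n).indicator 1 + b j₀ • (J' : Set n).indicator 1, ?_, ?_⟩
  · rw [← mulVec_add_smul_indicator_eq hcols, tsub_add_cancel_of_le hle]
  · rw [ssubset_iff_of_subset]
    · refine ⟨j₀, by simpa using hJb j₀ hj₀J, ?_⟩
      simp [hj₀J, disjoint_left.mp hdisj hj₀J]
    · intro j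
      by_cases hj' : j ∈ J'
      · simp [hJ'b j hj']
      · simp only [mem_filter, mem_univ, true_and]
        exact fun h hb => h (by simp [hj', hb])

end Matrix

theorem reduce_nonzero_entries_general (m L k : ℕ)
    (A : Matrix (Fin m) (Fin L) ℕ)
    (c : Fin m → ℕ) (b : Fin L → ℕ) (hb : A.mulVec b = c)
    (hpos : ∀ j : Fin L, (j : ℕ) < k → 0 < b j)
    (J J' : Finset (Fin L))
    (hJk : ∀ j ∈ J, (j : ℕ) < k) (hJ'k : ∀ j ∈ J', (j : ℕ) < k)
    (hdisj : Disjoint J J') (hJnonempty : J.Nonempty)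
    (hcols : ∀ i, ∑ j ∈ J, A i j = ∑ j ∈ J', A i j) :
    ∃ bstar : Fin L → ℕ, A.mulVec bstar = c ∧
      (Finset.univ.filter (fun j => bstar j ≠ 0)).card <
        (Finset.univ.filter (fun j => b j ≠ 0)).card := by
  obtain ⟨bstar, hAbstar, hsupp⟩ := A.exists_mulVec_eq_support_ssubset b hdisj hJnonempty
    (fun j hj => (hpos j (hJk j hj)).ne') (fun j hj => (hpos j (hJ'k j hj)).ne') hcols
  exact ⟨bstar, hAbstar.trans hb, card_lt_card hsupp⟩

theorem reduce_nonzero_entries (m L k : ℕ)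
    (A : Matrix (Fin m) (Fin L) ℕ) (hA : ∀ i j, A i j = 0 ∨ A i j = 1)
    (c : Fin m → ℕ) (b : Fin L → ℕ) (hb : A.mulVec b = c)
    (hkL : k ≤ L)
    (hpos : ∀ j : Fin L, (j : ℕ) < k → 0 < b j)
    (hzero : ∀ j : Fin L, k ≤ (j : ℕ) → b j = 0)
    (J J' : Finset (Fin L))
    (hJk : ∀ j ∈ J, (j : ℕ) < k) (hJ'k : ∀ j ∈ J', (j : ℕ) < k)
    (hne : J ≠ J') (hdisj : Disjoint J J') (hJnonempty : J.Nonempty)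
    (hcols : ∀ i, ∑ j ∈ J, A i j = ∑ j ∈ J', A i j) :
    ∃ bstar : Fin L → ℕ, A.mulVec bstar = c ∧
      (Finset.univ.filter (fun j => bstar j ≠ 0)).card <
        (Finset.univ.filter (fun j => b j ≠ 0)).card :=
  reduce_nonzero_entries_general m L k A c b hb hpos J J' hJk hJ'k hdisj hJnonempty hcols
end

section
/- Fix m ≥ 6. Let A be the m×(m+1) matrix whose rows 1 through m−1 have row i equal to 1 in columns i, i+1, i+2 and 0 elsewhere, and whose last row is (1,1,0,1,0,0,1,0,…,0). Let c = (3,3,…,3,4)ᵀ with m−1 threes followed by a 4. Then the all-ones vector of length m+1 is the unique solution over ℕ of A·x = c. -/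
/-! Subtracting consecutive equations `x k + x (k+1) + x (k+2) = 3` gives `x k = x (k+3)`, so a
solution is 3-periodic. The last equation then reads `3 x₀ + x₁ = 4`, which together with
`x₀ + x₁ + x₂ = 3` forces `x₀ = x₁ = x₂ = 1` in `ℕ`. -/

open Finset Matrix

section ZeroOneRows

variable {R : Type*} [NonAssocSemiring R]

lemma Fin.sum_ite_val_mem {n : ℕ} (b : Fin n → R) {S : Finset ℕ} (hS : S ⊆ range n) :
    ∑ j : Fin n, (if (j : ℕ) ∈ S then b j else 0) = ∑ k ∈ S, Function.extend Fin.val b 0 k := by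
  simp_rw [← Fin.val_injective.extend_apply b 0]
  rw [Fin.sum_univ_eq_sum_range (fun k => if k ∈ S then Function.extend Fin.val b 0 k else 0),
    ← sum_filter, filter_mem_eq_inter, inter_eq_right.mpr hS]

lemma Matrix.mulVec_apply_of_row_eq_indicator {m n : ℕ} (A : Matrix (Fin m) (Fin n) R)
    (b : Fin n → R) (i : Fin m) {S : Finset ℕ} (hS : S ⊆ range n)
    (hA : ∀ j, A i j = if (j : ℕ) ∈ S then 1 else 0) :
    (A *ᵥ b) i = ∑ k ∈ S, Function.extend Fin.val b 0 k := by
  simp only [mulVec, dotProduct, hA, ite_mul, one_mul, zero_mul]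
  exact Fin.sum_ite_val_mem b hS

end ZeroOneRows

section PeriodThree

variable {M : Type*} [AddCancelCommMonoid M] {x : ℕ → M} {n : ℕ} {s : M}

lemma eq_add_three_of_sum_three_eq (h : ∀ k, k + 2 ≤ n → x k + x (k + 1) + x (k + 2) = s)
    {k : ℕ} (hk : k + 3 ≤ n) : x k = x (k + 3) := by
  have h₀ : x k + x (k + 1) + x (k + 2) = s := h k (by omega)
  have h₁ : x (k + 1) + x (k + 2) + x (k + 3) = s := h (k + 1) (by omega)
  refine add_right_cancel (b := x (k + 1) + x (k + 2)) ?_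
  rw [← add_assoc, h₀, ← h₁, add_comm (x (k + 3))]

lemma eq_mod_three_of_sum_three_eq (h : ∀ k, k + 2 ≤ n → x k + x (k + 1) + x (k + 2) = s)
    {k : ℕ} (hk : k ≤ n) : x k = x (k % 3) := by
  induction k using Nat.strong_induction_on with
  | _ k ih =>
    by_cases hk3 : k < 3
    · rw [Nat.mod_eq_of_lt hk3]
    · obtain ⟨j, rfl⟩ : ∃ j, k = j + 3 := ⟨k - 3, by omega⟩
      rw [← eq_add_three_of_sum_three_eq h hk, ih j (by omega) (by omega), Nat.add_mod_right]

end PeriodThree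

lemma eq_one_of_sum_three_eq_three {x : ℕ → ℕ} {n : ℕ} (hn : 6 ≤ n)
    (h : ∀ k, k + 2 ≤ n → x k + x (k + 1) + x (k + 2) = 3) (h₄ : x 0 + x 1 + x 3 + x 6 = 4)
    {k : ℕ} (hk : k ≤ n) : x k = 1 := by
  have h₃ : x 3 = x 0 := eq_mod_three_of_sum_three_eq h (by omega)
  have h₆ : x 6 = x 0 := eq_mod_three_of_sum_three_eq h hn
  have h₀ : x 0 + x 1 + x 2 = 3 := h 0 (by omega)
  have hmod : k % 3 < 3 := Nat.mod_lt k (by norm_num)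
  rw [eq_mod_three_of_sum_three_eq h hk]
  interval_cases k % 3 <;> omega

def rowSupport (m i : ℕ) : Finset ℕ := if i + 1 < m then {i, i + 1, i + 2} else {0, 1, 3, 6}

lemma rowSupport_subset_range {m i : ℕ} (hm : 6 ≤ m) (hi : i < m) :
    rowSupport m i ⊆ range (m + 1) := by
  unfold rowSupport
  split_ifs <;> intro k <;> simp only [mem_insert, mem_singleton, mem_range] <;> omega

lemma sum_rowSupport {M : Type*} [AddCommMonoid M] (m i : ℕ) (x : ℕ → M) :
    ∑ k ∈ rowSupport m i, x k =
      if i + 1 < m then x i + x (i + 1) + x (i + 2) else x 0 + x 1 + x 3 + x 6 := by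
  unfold rowSupport
  split_ifs
  · rw [sum_insert (by simp), sum_insert (by simp), sum_singleton, add_assoc]
  · simp [add_assoc]

theorem unique_nat_solution_all_ones (m : ℕ) (hm : 6 ≤ m)
    (A : Matrix (Fin m) (Fin (m + 1)) ℕ)
    (hA : ∀ i j, A i j =
      if (i : ℕ) + 1 < m then
        (if (j : ℕ) = i ∨ (j : ℕ) = (i : ℕ) + 1 ∨ (j : ℕ) = (i : ℕ) + 2 then 1 else 0)
      else
        (if (j : ℕ) = 0 ∨ (j : ℕ) = 1 ∨ (j : ℕ) = 3 ∨ (j : ℕ) = 6 then 1 else 0))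
    (c : Fin m → ℕ)
    (hc : ∀ i, c i = if (i : ℕ) + 1 < m then 3 else 4) :
    ∀ b : Fin (m + 1) → ℕ, A.mulVec b = c ↔ b = fun _ => 1 := by
  intro b
  have hrow : ∀ i : Fin m, (A *ᵥ b) i = ∑ k ∈ rowSupport m i, Function.extend Fin.val b 0 k :=
    fun i => A.mulVec_apply_of_row_eq_indicator b i (rowSupport_subset_range hm i.isLt)
      fun j => by simp only [hA, rowSupport]; split_ifs <;> simp_all
  set x := Function.extend Fin.val b 0
  have hx : ∀ j : Fin (m + 1), x j = b j := Fin.val_injective.extend_apply b 0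
  simp_rw [funext_iff, hrow, sum_rowSupport, hc]
  constructor
  · intro h j
    have htriple : ∀ k, k + 2 ≤ m → x k + x (k + 1) + x (k + 2) = 3 := fun k hk => by
      simpa only [if_pos (show k + 1 < m by omega)] using h ⟨k, by omega⟩
    have hlast : x 0 + x 1 + x 3 + x 6 = 4 := by
      simpa only [if_neg (show ¬(m - 1 + 1 < m) by omega)] using h ⟨m - 1, by omega⟩
    rw [← hx]
    exact eq_one_of_sum_three_eq_three hm htriple hlast j.is_le
  · intro h i
    have hx₁ : ∀ k ≤ m, x k = 1 := fun k hk => (hx ⟨k, by omega⟩).trans (h _)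
    have := i.isLt
    split_ifs <;> simp (disch := omega) only [hx₁]
end

section
/- Let Φ be a satisfiable finite conjunction of constraints of the form Σ_{j∈S_i} x_j ⋈_i C_i for i = 1,…,m, where each S_i ⊆ {1,…,L}, each ⋈_i ∈ {≤, ≥, =}, each C_i ∈ ℕ, and solutions range over ℕ^L. If (α_1,…,α_L) ∈ ℕ^L is a solution and C = max_i C_i, then (min(α_1,C),…,min(α_L,C)) is also a solution. -/
inductive NumRel
  | le | ge | eq

def NumRel.holds : NumRel → ℕ → ℕ → Prop
  | NumRel.le, a, b => a ≤ b
  | NumRel.ge, a, b => b ≤ a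
  | NumRel.eq, a, b => a = b

theorem capping_preserves_constraints (m L : ℕ)
    (S : Fin m → Finset (Fin L)) (r : Fin m → NumRel) (C : Fin m → ℕ)
    (α : Fin L → ℕ)
    (hα : ∀ i, (r i).holds (∑ j ∈ S i, α j) (C i)) :
    ∀ i, (r i).holds (∑ j ∈ S i, min (α j) (Finset.univ.sup C)) (C i) := by
  intro i
  set B := Finset.univ.sup C with hB
  have hCB : C i ≤ B := Finset.le_sup (Finset.mem_univ i)
  have hle : ∑ j ∈ S i, min (α j) B ≤ ∑ j ∈ S i, α j :=
    Finset.sum_le_sum fun j _ => min_le_left _ _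
  have h := hα i
  cases hr : r i <;> rw [hr] at h <;> simp only [NumRel.holds] at *
  · exact le_trans hle h
  · by_cases hall : ∀ j ∈ S i, α j ≤ B
    · have : ∑ j ∈ S i, min (α j) B = ∑ j ∈ S i, α j :=
        Finset.sum_congr rfl fun j hj => min_eq_left (hall j hj)
      rw [this]; exact h
    · push_neg at hall
      obtain ⟨j, hj, hjB⟩ := hall
      calc C i ≤ B := hCB
        _ = min (α j) B := (min_eq_right hjB.le).symm
        _ ≤ ∑ j ∈ S i, min (α j) B := Finset.single_le_sum (f := fun j => min (α j) B) (fun _ _ => Nat.zero_le _) hj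
  · have : ∑ j ∈ S i, min (α j) B = ∑ j ∈ S i, α j :=
      Finset.sum_congr rfl fun j hj => min_eq_left <| le_trans
        (le_trans (Finset.single_le_sum (fun _ _ => Nat.zero_le _) hj) h.le) hCB
    rw [this]; exact h
end

section
/- Let m ≥ 6 and let A, c be the m×(m+1) Boolean system with unique ℕ-solution the all-ones vector (rows: x_i+x_{i+1}+x_{i+2}=3 for i<m, and x₁+x₂+x₄+x₇=4). Then A·x = c has a solution over the nonnegative rationals with at most m non-zero entries; in particular it has a nonnegative rational solution with at least one entry equal to zero. -/
/-!
Take the vector of period three with pattern `(1/2, 5/2, 0)`. Every window of three consecutive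
entries sums to `3`, and the last row reads `b₀ + b₁ + b₃ + b₆ = 3 b₀ + b₁ = 4`; the pattern is
the solution of these two conditions with third entry `0`, so it vanishes at index `2`.
-/

open Finset Fin.NatCast

theorem Fin.sum_boole_mul_eq_sum_of_forall_lt {R : Type*} [NonAssocSemiring R] {n : ℕ}
    {s : Finset ℕ} (hs : ∀ j ∈ s, j < n) (f : ℕ → R) :
    ∑ j : Fin n, (if (j : ℕ) ∈ s then 1 else 0) * f j = ∑ j ∈ s, f j := by
  rw [Fin.sum_univ_eq_sum_range (fun j => (if j ∈ s then 1 else 0) * f j)]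
  simp only [boole_mul, sum_ite_mem]
  congr 1
  exact inter_eq_right.mpr fun j hj => mem_range.mpr (hs j hj)

theorem Fin.card_filter_ne_zero_le {M : Type*} [Zero M] [DecidableEq M] {n : ℕ}
    (b : Fin (n + 1) → M) {j₀ : Fin (n + 1)} (hj₀ : b j₀ = 0) : #{j | b j ≠ 0} ≤ n := by
  have hlt : #{j | b j ≠ 0} < #(univ : Finset (Fin (n + 1))) :=
    card_lt_card (filter_ssubset.mpr ⟨j₀, mem_univ _, not_not.mpr hj₀⟩)
  simpa using hlt

def tilingWitness (j : ℕ) : ℚ := ![1/2, 5/2, 0] (j : Fin 3)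

theorem tilingWitness_nonneg (j : ℕ) : 0 ≤ tilingWitness j := by
  unfold tilingWitness
  generalize (j : Fin 3) = k
  fin_cases k <;> norm_num

theorem tilingWitness_add_add (j : ℕ) :
    tilingWitness j + tilingWitness (j + 1) + tilingWitness (j + 2) = 3 := by
  unfold tilingWitness
  push_cast
  generalize (j : Fin 3) = k
  fin_cases k <;> simp <;> norm_num

theorem rational_sparse_solution_of_tiling_system (m : ℕ) (hm : 6 ≤ m)
    (A : Matrix (Fin m) (Fin (m + 1)) ℚ)
    (hA : ∀ i j, A i j =
      if (i : ℕ) + 1 < m then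
        (if (j : ℕ) = i ∨ (j : ℕ) = (i : ℕ) + 1 ∨ (j : ℕ) = (i : ℕ) + 2 then 1 else 0)
      else
        (if (j : ℕ) = 0 ∨ (j : ℕ) = 1 ∨ (j : ℕ) = 3 ∨ (j : ℕ) = 6 then 1 else 0))
    (c : Fin m → ℚ)
    (hc : ∀ i, c i = if (i : ℕ) + 1 < m then 3 else 4) :
    ∃ b : Fin (m + 1) → ℚ, (∀ j, 0 ≤ b j) ∧ A.mulVec b = c ∧
      (Finset.univ.filter (fun j => b j ≠ 0)).card ≤ m ∧
      ∃ j, b j = 0 := by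
  let b : Fin (m + 1) → ℚ := fun j => tilingWitness j
  have hb₂ : b ⟨2, by omega⟩ = 0 := by simp [b, tilingWitness]
  refine ⟨b, fun j => tilingWitness_nonneg j, ?_, Fin.card_filter_ne_zero_le b hb₂, _, hb₂⟩
  funext i
  simp only [Matrix.mulVec, dotProduct, hA, hc]
  split_ifs with hi
  · have hrow (j : ℕ) :
        (j = i ∨ j = i + 1 ∨ j = i + 2) ↔ j ∈ ({(i : ℕ), (i : ℕ) + 1, (i : ℕ) + 2} : Finset ℕ) := by
      simp
    simp only [hrow]
    rw [Fin.sum_boole_mul_eq_sum_of_forall_lt (by simp; omega)]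
    simp [← tilingWitness_add_add i, add_assoc]
  · have hrow (j : ℕ) : (j = 0 ∨ j = 1 ∨ j = 3 ∨ j = 6) ↔ j ∈ ({0, 1, 3, 6} : Finset ℕ) := by
      simp
    simp only [hrow]
    rw [Fin.sum_boole_mul_eq_sum_of_forall_lt (by simp; omega)]
    simp [tilingWitness]
    norm_num
end
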